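/- Let λ be a peak partition. Then {sort(T) : T ∈ SPYCT(α) for some peak composition α with λ(α) = λ} = SPYT(λ); that is, the image under the column-sorting map sort of the union of the sets SPYCT(α) over all peak compositions α whose decreasing rearrangement is λ equals the set of standard peak Young tableaux of shape λ. -/

import Mathlib

namespace PaperSPIT

/-- The `j`-th part (1-indexed) of a composition presented as a list. -/
def part (α : List ℕ) (j : ℕ) : ℕ := α.getD (j - 1) 0

/-- The largest part. -/
def maxPart (α : List ℕ) : ℕ := α.foldr max 0

/-- The composition diagram: boxes `(i, j)` (column `i`, row `j`), both 1-indexed,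
rows numbered from bottom to top. -/
def cd (α : List ℕ) : Finset (ℕ × ℕ) :=
  (Finset.Icc 1 (maxPart α) ×ˢ Finset.Icc 1 α.length).filter fun p => p.1 ≤ part α p.2

/-- `α` is a composition of `n`. -/
def IsComposition (n : ℕ) (α : List ℕ) : Prop :=
  (∀ a ∈ α, 0 < a) ∧ α.sum = n

/-- `α` is a peak composition of `n`: all parts except possibly the last are `> 1`. -/
def IsPeakComposition (n : ℕ) (α : List ℕ) : Prop :=
  IsComposition n α ∧ ∀ i, i + 1 < α.length → 1 < α.getD i 0

/-- A standard filling of `cd α`: a bijection from the boxes onto `{1, …, n}`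
(normalized to be `0` off the diagram). -/
def IsStandardFilling (α : List ℕ) (T : ℕ × ℕ → ℕ) : Prop :=
  Set.BijOn T (cd α : Set (ℕ × ℕ)) (Set.Icc 1 α.sum) ∧
  ∀ p : ℕ × ℕ, p ∉ cd α → T p = 0

def RowsIncrease (α : List ℕ) (T : ℕ × ℕ → ℕ) : Prop :=
  ∀ i j : ℕ, (i, j) ∈ cd α → (i + 1, j) ∈ cd α → T (i, j) < T (i + 1, j)

def RowsWeaklyIncrease (α : List ℕ) (T : ℕ × ℕ → ℕ) : Prop :=
  ∀ i j : ℕ, (i, j) ∈ cd α → (i + 1, j) ∈ cd α → T (i, j) ≤ T (i + 1, j)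

def FirstColIncreases (α : List ℕ) (T : ℕ × ℕ → ℕ) : Prop :=
  ∀ j : ℕ, (1, j) ∈ cd α → (1, j + 1) ∈ cd α → T (1, j) < T (1, j + 1)

/-- Standard immaculate tableau. -/
def IsSIT (α : List ℕ) (T : ℕ × ℕ → ℕ) : Prop :=
  IsStandardFilling α T ∧ RowsIncrease α T ∧ FirstColIncreases α T

/-- Peak-tableau condition: for every `1 ≤ k ≤ n` the boxes with entries `≤ k`
form the diagram of a peak composition. -/
def PeakCond (α : List ℕ) (T : ℕ × ℕ → ℕ) : Prop :=
  ∀ k : ℕ, 1 ≤ k → k ≤ α.sum → ∃ β : List ℕ,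
    IsPeakComposition k β ∧ (cd α).filter (fun p => T p ≤ k) = cd β

/-- Standard peak immaculate tableau. -/
def IsSPIT (α : List ℕ) (T : ℕ × ℕ → ℕ) : Prop := IsSIT α T ∧ PeakCond α T

def SPITset (α : List ℕ) : Set (ℕ × ℕ → ℕ) := {T | IsSPIT α T}

/-- The Young triple condition. -/
def YoungTriple (α : List ℕ) (T : ℕ × ℕ → ℕ) : Prop :=
  ∀ k i j : ℕ, i < j → (k, j) ∈ cd α → (k + 1, i) ∈ cd α → T (k, j) ≤ T (k + 1, i) →
    (k + 1, j) ∈ cd α ∧ T (k + 1, j) < T (k + 1, i)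

/-- Standard Young composition tableau. -/
def IsSYCT (α : List ℕ) (T : ℕ × ℕ → ℕ) : Prop :=
  IsStandardFilling α T ∧ RowsIncrease α T ∧ FirstColIncreases α T ∧ YoungTriple α T

def SYCTset (α : List ℕ) : Set (ℕ × ℕ → ℕ) := {T | IsSYCT α T}

/-- Standard peak Young composition tableau. -/
def IsSPYCT (α : List ℕ) (T : ℕ × ℕ → ℕ) : Prop := IsSYCT α T ∧ PeakCond α T

def SPYCTset (α : List ℕ) : Set (ℕ × ℕ → ℕ) := {T | IsSPYCT α T}

/-- Row reading word `w_r`: rows from top to bottom, each row left to right. -/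
def wR (α : List ℕ) (T : ℕ × ℕ → ℕ) : List ℕ :=
  ((List.range α.length).reverse.map fun j =>
    (List.range (part α (j + 1))).map fun i => T (i + 1, j + 1)).flatten

/-- The `i`-th column of a filling, read bottom to top. -/
def colList (α : List ℕ) (T : ℕ × ℕ → ℕ) (i : ℕ) : List ℕ :=
  ((List.range α.length).filter fun j => decide (i ≤ part α (j + 1))).map
    fun j => T (i, j + 1)

/-- Column reading word `w_c`: columns left to right, each column bottom to top. -/
def wC (α : List ℕ) (T : ℕ × ℕ → ℕ) : List ℕ :=
  ((List.range (maxPart α)).map fun i => colList α T (i + 1)).flatten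

/-- Young reading word `w_Y`: first column top to bottom, then subsequent columns
bottom to top, columns left to right. -/
def wY (α : List ℕ) (T : ℕ × ℕ → ℕ) : List ℕ :=
  (colList α T 1).reverse ++
    ((List.range (maxPart α - 1)).map fun i => colList α T (i + 2)).flatten

/-- Descent set of a word with distinct letters: `i` such that `i` and `i+1` occur
and `i` occurs to the right of `i+1`. -/
def DesWord (w : List ℕ) : Finset ℕ :=
  w.toFinset.filter fun i => (i + 1) ∈ w ∧ w.idxOf (i + 1) < w.idxOf i


/-- Columns increase from bottom to top. -/
def ColsIncrease (l : List ℕ) (T : ℕ × ℕ → ℕ) : Prop :=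
  ∀ i j : ℕ, (i, j) ∈ cd l → (i, j + 1) ∈ cd l → T (i, j) < T (i, j + 1)

/-- A standard Young tableau of (partition) shape `l`. -/
def IsSYT (l : List ℕ) (T : ℕ × ℕ → ℕ) : Prop :=
  IsStandardFilling l T ∧ RowsIncrease l T ∧ ColsIncrease l T

/-- The set of standard peak Young tableaux of shape `l`. -/
def SPYTset (l : List ℕ) : Set (ℕ × ℕ → ℕ) := {T | IsSYT l T ∧ PeakCond l T}

/-- The column-sorting map: the filling of `cd l` whose `i`-th column consists of the
entries of the `i`-th column of `T` arranged in increasing order from bottom to top. -/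
def colSortTo (l α : List ℕ) (T : ℕ × ℕ → ℕ) : ℕ × ℕ → ℕ := fun p =>
  if p ∈ cd l then
    ((((cd α).filter fun q => q.1 = p.1).image T).sort (· ≤ ·)).getD (p.2 - 1) 0
  else 0

/-!
Induction on `n`, removing the box that holds the largest entry `n`. In an SPYCT of shape `α`
the peak-tableau condition at `n - 1` says that the other boxes form a peak composition `β`, and
the restriction is an SPYCT of shape `β`. After sorting columns, `n` sits on top of its column,
i.e. at the outer corner by which `λ(α)` exceeds `λ(β)`, so adding a maximal entry at a corner
preserves SPYTs. Conversely, the entry `n` of an SPYT of shape `λ` sits at a corner `(i, j)`;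
by induction the rest is `sort T'` for an SPYCT `T'` of some shape `α'`, and putting `n` at the
end of the topmost row of `α'` of length `i - 1` (on a new top row if `i = 1`) keeps the Young
triple condition and gives an SPYCT whose sort is the original tableau. All shape bookkeeping is
done with column lengths, which determine a composition up to rearrangement.
-/

def colLength (α : List ℕ) (i : ℕ) : ℕ := α.countP (i ≤ ·)

section Diagram

variable {α β l : List ℕ} {i j : ℕ}

lemma part_le_maxPart (α : List ℕ) (j : ℕ) : part α j ≤ maxPart α := by
  induction α generalizing j with
  | nil => simp [part]
  | cons x xs ih =>
    rcases j with _ | _ | j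
    · exact le_max_left _ _
    · exact le_max_left _ _
    · exact (ih (j + 1)).trans (le_max_right _ _)

lemma mem_cd : (i, j) ∈ cd α ↔ 1 ≤ i ∧ 1 ≤ j ∧ j ≤ α.length ∧ i ≤ part α j := by
  simp only [cd, Finset.mem_filter, Finset.mem_product, Finset.mem_Icc]
  have := part_le_maxPart α j
  constructor
  · rintro ⟨⟨⟨h1, -⟩, h2, h3⟩, h4⟩
    exact ⟨h1, h2, h3, h4⟩
  · rintro ⟨h1, h2, h3, h4⟩
    exact ⟨⟨⟨h1, h4.trans this⟩, h2, h3⟩, h4⟩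

@[simp]
lemma cd_nil : cd [] = ∅ := by
  ext ⟨i, j⟩
  simp only [mem_cd, List.length_nil, Finset.notMem_empty, iff_false]
  omega

lemma colLength_cons (x : ℕ) (xs : List ℕ) (i : ℕ) :
    colLength (x :: xs) i = colLength xs i + if i ≤ x then 1 else 0 := by
  simp [colLength, List.countP_cons]

lemma colLength_anti (α : List ℕ) : Antitone (colLength α) := fun _ _ h =>
  List.countP_mono_left fun a _ ha => by simp only [decide_eq_true_eq] at ha ⊢; omega

lemma colLength_eq_of_perm (h : α.Perm β) (i : ℕ) : colLength α i = colLength β i :=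
  h.countP_eq _

lemma count_add_colLength_succ (α : List ℕ) (a : ℕ) :
    α.count a + colLength α (a + 1) = colLength α a := by
  induction α with
  | nil => simp [colLength]
  | cons x xs ih =>
    rw [List.count_cons, colLength_cons, colLength_cons, ← ih]
    split_ifs with h <;> simp only [beq_iff_eq] at h <;> omega

lemma perm_of_colLength_eq (hα : ∀ a ∈ α, 0 < a) (hβ : ∀ a ∈ β, 0 < a)
    (h : ∀ i, 1 ≤ i → colLength α i = colLength β i) : α.Perm β := by
  refine List.perm_iff_count.mpr fun a => ?_
  rcases Nat.eq_zero_or_pos a with rfl | ha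
  · rw [List.count_eq_zero.mpr fun h => (hα 0 h).false,
      List.count_eq_zero.mpr fun h => (hβ 0 h).false]
  · have := count_add_colLength_succ α a
    have := count_add_colLength_succ β a
    have := h a ha
    have := h (a + 1) (by omega)
    omega

lemma mem_cd_iff_le_colLength (hl : l.Pairwise (· ≥ ·)) :
    (i, j) ∈ cd l ↔ 1 ≤ i ∧ 1 ≤ j ∧ j ≤ colLength l i := by
  induction l generalizing j with
  | nil =>
    simp only [cd_nil, Finset.notMem_empty, colLength, List.countP_nil, false_iff]
    omega
  | cons x xs ih =>
    obtain ⟨hx, hxs⟩ := List.pairwise_cons.mp hl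
    have hzero : ¬ i ≤ x → colLength xs i = 0 := fun hix =>
      List.countP_eq_zero.mpr fun a ha => by have := hx a ha; simp only [decide_eq_true_eq]; omega
    rw [colLength_cons]
    rcases j with _ | _ | j
    · simp [mem_cd]
    · simp only [mem_cd, List.length_cons, part]
      by_cases hix : i ≤ x
      · simp [hix]
      · simp [hix, hzero hix]
    · have hj : (i, j + 1 + 1) ∈ cd (x :: xs) ↔ (i, j + 1) ∈ cd xs := by
        simp only [mem_cd, List.length_cons, part, Nat.add_sub_cancel, List.getD_cons_succ]
        omega
      rw [hj, ih hxs]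
      by_cases hix : i ≤ x
      · simp [hix]
      · simp [hix, hzero hix]

lemma pairwise_ge_iff_mem_cd (hα : ∀ a ∈ α, 0 < a) :
    α.Pairwise (· ≥ ·) ↔ ∀ i j, (i, j + 2) ∈ cd α → (i, j + 1) ∈ cd α := by
  constructor
  · intro hs i j h
    rw [mem_cd_iff_le_colLength hs] at h ⊢
    omega
  · intro h
    refine List.isChain_iff_pairwise.mp (List.isChain_iff_getElem.mpr fun k hk => ?_)
    have hk1 : α[k + 1] ≥ 1 := hα _ (List.getElem_mem _)
    have hbox : (α[k + 1], k + 2) ∈ cd α := by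
      refine mem_cd.mpr ⟨hk1, by omega, hk, ?_⟩
      simp [part, List.getD_eq_getElem?_getD, hk]
    have := (mem_cd.mp (h _ k hbox)).2.2.2
    simpa [part, List.getD_eq_getElem?_getD, show k < α.length by omega] using this

end Diagram

section Columns

variable {α β : List ℕ} {b : ℕ × ℕ} {i : ℕ}

lemma sum_range_ite_le_getD (α : List ℕ) (i : ℕ) :
    ∑ j ∈ Finset.range α.length, (if i ≤ α.getD j 0 then 1 else 0) = colLength α i := by
  induction α with
  | nil => simp [colLength]
  | cons x xs ih =>
    rw [List.length_cons, Finset.sum_range_succ', colLength_cons, ← ih]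
    simp only [List.getD_cons_succ, List.getD_cons_zero]

lemma card_filter_fst_cd (hi : 1 ≤ i) : ((cd α).filter (·.1 = i)).card = colLength α i := by
  have hcol : (cd α).filter (·.1 = i) =
      ((Finset.range α.length).filter (i ≤ α.getD · 0)).image fun j => (i, j + 1) := by
    ext ⟨x, y⟩
    simp only [Finset.mem_filter, mem_cd, part, Finset.mem_image, Finset.mem_range,
      Prod.mk.injEq]
    constructor
    · rintro ⟨⟨-, hy, hyl, hx⟩, rfl⟩
      exact ⟨y - 1, ⟨by omega, hx⟩, rfl, by omega⟩
    · rintro ⟨j, ⟨hj, hx⟩, rfl, rfl⟩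
      exact ⟨⟨hi, by omega, by omega, by simpa using hx⟩, rfl⟩
  rw [hcol, Finset.card_image_of_injective _ fun _ _ h => by simpa using h, Finset.card_filter,
    sum_range_ite_le_getD]

lemma colLength_of_cd_eq_insert (hcd : cd α = insert b (cd β)) (hb : b ∉ cd β) (hi : 1 ≤ i) :
    colLength α i = colLength β i + if b.1 = i then 1 else 0 := by
  rw [← card_filter_fst_cd hi, ← card_filter_fst_cd hi, hcd, Finset.filter_insert]
  split_ifs
  · exact Finset.card_insert_of_notMem fun h => hb (Finset.mem_filter.mp h).1
  · rfl

end Columns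

section Compositions

variable {n : ℕ} {α l : List ℕ}

lemma IsComposition.eq_nil (h : IsComposition 0 α) : α = [] := by
  obtain ⟨hpos, hsum⟩ := h
  rcases α with _ | ⟨x, xs⟩
  · rfl
  · have := hpos x List.mem_cons_self
    simp only [List.sum_cons] at hsum
    omega

lemma IsComposition.of_perm (h : IsComposition n α) (hperm : α.Perm l) : IsComposition n l :=
  ⟨fun a ha => h.1 a (hperm.mem_iff.mpr ha), hperm.sum_eq ▸ h.2⟩

lemma count_one_le_of_one_lt_getD (h : ∀ i, i + 1 < α.length → 1 < α.getD i 0) :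
    α.count 1 ≤ 1 := by
  induction α with
  | nil => simp
  | cons x xs ih =>
    rcases xs with _ | ⟨y, ys⟩
    · exact List.count_le_length
    · have hx : 1 < x := by simpa using h 0 (by simp)
      have hxs := ih fun i hi => by simpa using h (i + 1) (by simp at hi ⊢; omega)
      rw [List.count_cons]
      simp [hx.ne', hxs]

lemma one_lt_getD_of_pairwise_ge (hl : l.Pairwise (· ≥ ·)) (hpos : ∀ a ∈ l, 0 < a)
    (h1 : l.count 1 ≤ 1) (i : ℕ) (hi : i + 1 < l.length) : 1 < l.getD i 0 := by
  rw [List.getD_eq_getElem _ _ (by omega)]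
  by_contra hle
  have hge := List.pairwise_iff_getElem.mp hl i (i + 1) (by omega) hi (by omega)
  have hpos' := hpos _ (List.getElem_mem hi)
  have hsplit := List.take_append_drop i l
  rw [List.drop_eq_getElem_cons (by omega), List.drop_eq_getElem_cons hi] at hsplit
  rw [← hsplit, List.count_append, List.count_cons, List.count_cons] at h1
  simp only [beq_iff_eq, show l[i] = 1 by omega, show l[i + 1] = 1 by omega, if_true] at h1
  omega

lemma IsPeakComposition.of_perm (hl : l.Pairwise (· ≥ ·)) (hα : IsPeakComposition n α)
    (hperm : α.Perm l) : IsPeakComposition n l := by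
  have hl' := hα.1.of_perm hperm
  refine ⟨hl', one_lt_getD_of_pairwise_ge hl hl'.1 ?_⟩
  rw [← hperm.count_eq]
  exact count_one_le_of_one_lt_getD hα.2

end Compositions

section Shapes

variable {n i r : ℕ} {α' l l' : List ℕ}

structure IsAddableCorner (l' l : List ℕ) (b : ℕ × ℕ) : Prop where
  cd_eq : cd l = insert b (cd l')
  notMem : b ∉ cd l'
  right_notMem : (b.1 + 1, b.2) ∉ cd l
  above_notMem : (b.1, b.2 + 1) ∉ cd l

lemma isAddableCorner_of_colLength (hl : l.Pairwise (· ≥ ·)) (hl' : l'.Pairwise (· ≥ ·))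
    (hi : 1 ≤ i) (h : ∀ x, 1 ≤ x → colLength l x = colLength l' x + if i = x then 1 else 0) :
    IsAddableCorner l' l (i, colLength l' i + 1) where
  cd_eq := by
    ext ⟨x, y⟩
    rw [Finset.mem_insert, mem_cd_iff_le_colLength hl, mem_cd_iff_le_colLength hl',
      Prod.mk.injEq]
    rcases Nat.eq_zero_or_pos x with rfl | hx
    · omega
    · have := h x hx
      split_ifs at this with hix
      · subst hix; omega
      · have : x ≠ i := Ne.symm hix
        omega
  notMem := by rw [mem_cd_iff_le_colLength hl']; omega
  right_notMem := by
    have := colLength_anti l' (Nat.le_add_right i 1)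
    change (i + 1, _) ∉ _
    rw [mem_cd_iff_le_colLength hl, h _ (by omega), if_neg (by omega)]
    omega
  above_notMem := by
    change (i, _) ∉ _
    rw [mem_cd_iff_le_colLength hl, h _ hi, if_pos rfl]
    omega

lemma cd_append_one (α' : List ℕ) : cd (α' ++ [1]) = insert (1, α'.length + 1) (cd α') := by
  ext ⟨x, y⟩
  rw [Finset.mem_insert, mem_cd, mem_cd, Prod.mk.injEq, List.length_append,
    List.length_singleton]
  simp only [part]
  rcases Nat.lt_or_ge (y - 1) α'.length with hy | hy
  · rw [List.getD_append _ _ _ _ hy]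
    omega
  · rw [List.getD_append_right _ _ _ _ hy]
    by_cases hy' : y = α'.length + 1
    · subst hy'
      simp only [Nat.add_sub_cancel, Nat.sub_self, List.getD_cons_zero, and_true]
      omega
    · rcases h : y - 1 - α'.length with _ | k
      · omega
      · simp only [List.getD_cons_succ, List.getD_nil]
        omega

lemma part_set (hr : 1 ≤ r) (hrl : r ≤ α'.length) (v : ℕ) {j : ℕ} (hj : 1 ≤ j) :
    part (α'.set (r - 1) v) j = if j = r then v else part α' j := by
  simp only [part, List.getD_eq_getElem?_getD, List.getElem?_set]
  split_ifs <;> first | omega | simp_all [show r - 1 < α'.length by omega]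

lemma cd_set_part_add_one (hr : 1 ≤ r) (hrl : r ≤ α'.length) :
    cd (α'.set (r - 1) (part α' r + 1)) = insert (part α' r + 1, r) (cd α') := by
  ext ⟨x, y⟩
  rw [Finset.mem_insert, mem_cd, mem_cd, Prod.mk.injEq, List.length_set]
  rcases Nat.eq_zero_or_pos y with rfl | hy
  · omega
  · rw [part_set hr hrl _ hy]
    split_ifs with hyr
    · subst hyr; omega
    · omega

/-- `α` arises from `α'` by adding the box `b` at a place where an SYCT of shape `α'` can
receive a new largest entry. -/
structure IsAddableBox (α' α : List ℕ) (b : ℕ × ℕ) : Prop where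
  cd_eq : cd α = insert b (cd α')
  notMem : b ∉ cd α'
  right_notMem : (b.1 + 1, b.2) ∉ cd α
  above_notMem : b.1 = 1 → (1, b.2 + 1) ∉ cd α
  above_mem : ∀ j, b.2 < j → (b.1 - 1, j) ∈ cd α → (b.1, j) ∈ cd α

lemma isAddableBox_append_one (α' : List ℕ) :
    IsAddableBox α' (α' ++ [1]) (1, α'.length + 1) where
  cd_eq := cd_append_one α'
  notMem h := by have := mem_cd.mp h; omega
  right_notMem h := by
    rw [cd_append_one, Finset.mem_insert, mem_cd] at h
    simp only [Prod.mk.injEq] at h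
    omega
  above_notMem _ h := by
    rw [cd_append_one, Finset.mem_insert, mem_cd] at h
    simp only [Prod.mk.injEq] at h
    omega
  above_mem _ _ h := absurd (mem_cd.mp h).1 (by omega)

lemma isAddableBox_set (hr : 1 ≤ r) (hrl : r ≤ α'.length) (hpos : 0 < part α' r)
    (htop : ∀ j, r < j → j ≤ α'.length → part α' j ≠ part α' r) :
    IsAddableBox α' (α'.set (r - 1) (part α' r + 1)) (part α' r + 1, r) where
  cd_eq := cd_set_part_add_one hr hrl
  notMem h := by have := mem_cd.mp h; omega
  right_notMem h := by
    rw [cd_set_part_add_one hr hrl, Finset.mem_insert, mem_cd] at h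
    simp only [Prod.mk.injEq] at h
    omega
  above_notMem h := by change part α' r + 1 = 1 at h; omega
  above_mem j hj h := by
    rw [cd_set_part_add_one hr hrl, Finset.mem_insert, mem_cd] at h ⊢
    simp only [Prod.mk.injEq, Nat.add_sub_cancel] at h ⊢
    have := htop j hj
    omega

lemma exists_isAddableBox (hα' : IsPeakComposition n α') (hi : 1 ≤ i)
    (hone : i = 1 → ∀ a ∈ α', 1 < a) (hmem : 2 ≤ i → i - 1 ∈ α') :
    ∃ α j, IsAddableBox α' α (i, j) ∧ (∀ a ∈ α, 0 < a) ∧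
      ∀ k, k + 1 < α.length → 1 < α.getD k 0 := by
  obtain rfl | hi2 : i = 1 ∨ 2 ≤ i := by omega
  · refine ⟨α' ++ [1], _, isAddableBox_append_one α', ?_, fun k hk => ?_⟩
    · simp only [List.mem_append, List.mem_singleton]
      rintro a (ha | rfl)
      exacts [hα'.1.1 a ha, one_pos]
    · rw [List.length_append, List.length_singleton] at hk
      rw [List.getD_append _ _ _ _ (by omega), List.getD_eq_getElem _ _ (by omega)]
      exact hone rfl _ (List.getElem_mem _)
  obtain ⟨m, hm, hmv⟩ := List.getElem_of_mem (hmem hi2)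
  have hP : 1 ≤ m + 1 ∧ part α' (m + 1) = i - 1 :=
    ⟨by omega, by rw [part, Nat.add_sub_cancel, List.getD_eq_getElem _ _ hm, hmv]⟩
  set r := Nat.findGreatest (fun j => 1 ≤ j ∧ part α' j = i - 1) α'.length
  obtain ⟨hr1, hrv⟩ := Nat.findGreatest_spec (P := fun j => 1 ≤ j ∧ part α' j = i - 1)
    (show m + 1 ≤ α'.length by omega) hP
  have hrl : r ≤ α'.length := Nat.findGreatest_le _
  have hb := isAddableBox_set hr1 hrl (by omega) fun j hj hjl hjr =>
    Nat.findGreatest_is_greatest hj hjl ⟨by omega, hjr.trans hrv⟩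
  rw [hrv, Nat.sub_add_cancel (by omega)] at hb
  refine ⟨_, r, hb, fun a ha => ?_, fun k hk => ?_⟩
  · rcases List.mem_or_eq_of_mem_set ha with ha | rfl
    · exact hα'.1.1 a ha
    · omega
  · rw [List.length_set] at hk
    have : (α'.set (r - 1) i).getD k 0 = if k + 1 = r then i else α'.getD k 0 :=
      part_set hr1 hrl i (show 1 ≤ k + 1 by omega)
    rw [this]
    split_ifs
    · omega
    · exact hα'.2 k hk

end Shapes

section Fillings

variable {α β : List ℕ} {T : ℕ × ℕ → ℕ} {b : ℕ × ℕ} {n : ℕ}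

lemma PeakCond.exists_eq_update (hPC : PeakCond α T) (hT : IsStandardFilling α T)
    (hsum : α.sum = n + 1) :
    ∃ b β T', IsPeakComposition n β ∧ cd α = insert b (cd β) ∧ b ∉ cd β ∧ T' b = 0 ∧
      T = Function.update T' b (n + 1) := by
  obtain ⟨b, hb, hTb⟩ := hT.1.surjOn (show n + 1 ∈ Set.Icc 1 α.sum by simp [hsum])
  have herase : (cd α).filter (T · ≤ n) = (cd α).erase b := by
    ext q
    simp only [Finset.mem_filter, Finset.mem_erase]
    constructor
    · rintro ⟨hq, hqn⟩
      exact ⟨by rintro rfl; omega, hq⟩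
    · rintro ⟨hqb, hq⟩
      have := (hT.1.mapsTo hq).2
      have := mt (hT.1.injOn hq hb) hqb
      exact ⟨hq, by omega⟩
  obtain ⟨β, hβ, hcd⟩ : ∃ β, IsPeakComposition n β ∧ (cd α).filter (T · ≤ n) = cd β := by
    rcases Nat.eq_zero_or_pos n with rfl | hn
    · refine ⟨[], ⟨⟨by simp, rfl⟩, by simp⟩, ?_⟩
      rw [cd_nil, Finset.filter_eq_empty_iff]
      exact fun q hq => by have := (hT.1.mapsTo hq).1; omega
    · exact hPC n hn (by omega)
  rw [herase] at hcd
  refine ⟨b, β, Function.update T b 0, hβ, by rw [← hcd, Finset.insert_erase hb],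
    by simp [← hcd], Function.update_self .., ?_⟩
  rw [Function.update_idem, ← hTb, Function.update_eq_self]

lemma isStandardFilling_update_iff (hcd : cd α = insert b (cd β)) (hb : b ∉ cd β)
    (hβ : β.sum = n) (hα : α.sum = n + 1) (hTb : T b = 0) :
    IsStandardFilling α (Function.update T b (n + 1)) ↔ IsStandardFilling β T := by
  have heq : Set.EqOn (Function.update T b (n + 1)) T (cd β) := fun q hq =>
    Function.update_of_ne (ne_of_mem_of_not_mem hq hb) _ _
  have hbij : Set.BijOn (Function.update T b (n + 1)) (cd α) (Set.Icc 1 α.sum) ↔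
      Set.BijOn T (cd β) (Set.Icc 1 β.sum) := by
    have h := Set.BijOn.insert_iff (f := Function.update T b (n + 1)) (t := Set.Icc 1 n)
      (Finset.mem_coe.not.mpr hb) (by simp)
    rw [Function.update_self] at h
    rw [hcd, Finset.coe_insert, hα, hβ, ← Set.insert_Icc_right_eq_Icc_add_one (by omega), h,
      heq.bijOn_iff]
  have hzero : (∀ p, p ∉ cd α → Function.update T b (n + 1) p = 0) ↔
      ∀ p, p ∉ cd β → T p = 0 := by
    simp only [hcd, Finset.mem_insert, not_or]
    refine ⟨fun h p hp => ?_, fun h p hp => ?_⟩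
    · by_cases hpb : p = b
      · rwa [hpb]
      · simpa [hpb] using h p ⟨hpb, hp⟩
    · simpa [hp.1] using h p hp.2
  exact and_congr hbij hzero

lemma peakCond_update_iff (hcd : cd α = insert b (cd β)) (hb : b ∉ cd β)
    (hβ : β.sum = n) (hα : IsPeakComposition (n + 1) α) (hT : IsStandardFilling β T) :
    PeakCond α (Function.update T b (n + 1)) ↔ PeakCond β T := by
  have hle : ∀ q ∈ cd β, T q ≤ n := fun q hq => hβ ▸ (hT.1.mapsTo hq).2
  have hfilter : ∀ k ≤ n, (cd α).filter (Function.update T b (n + 1) · ≤ k) =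
      (cd β).filter (T · ≤ k) := by
    intro k hk
    rw [hcd, Finset.filter_insert, Function.update_self, if_neg (by omega)]
    exact Finset.filter_congr fun q hq => by
      rw [Function.update_of_ne (ne_of_mem_of_not_mem hq hb)]
  rw [PeakCond, PeakCond, hα.1.2, hβ]
  refine ⟨fun h k hk1 hk2 => hfilter k hk2 ▸ h k hk1 (by omega), fun h k hk1 hk2 => ?_⟩
  obtain rfl | hk := Nat.eq_or_lt_of_le hk2
  · refine ⟨α, hα, Finset.filter_true_of_mem fun q hq => ?_⟩
    rcases Finset.mem_insert.mp (hcd ▸ hq) with rfl | hq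
    · simp
    · rw [Function.update_of_ne (ne_of_mem_of_not_mem hq hb)]
      exact (hle q hq).trans (Nat.le_succ n)
  · exact hfilter k (by omega) ▸ h k hk1 (by omega)

end Fillings

section Orders

variable {α β : List ℕ} {T : ℕ × ℕ → ℕ} {b : ℕ × ℕ} {n : ℕ}

lemma update_lt_update (hcd : cd α = insert b (cd β)) (hb : b ∉ cd β) (hT : IsStandardFilling β T)
    (hβ : β.sum = n) {p q : ℕ × ℕ} (hp : p ∈ cd α) (hq : q ∈ cd α) (hpb : p ≠ b)
    (hlt : p ∈ cd β → q ∈ cd β → T p < T q) :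
    Function.update T b (n + 1) p < Function.update T b (n + 1) q := by
  have hp' : p ∈ cd β := (Finset.mem_insert.mp (hcd ▸ hp)).resolve_left hpb
  rw [Function.update_of_ne hpb]
  rcases Finset.mem_insert.mp (hcd ▸ hq) with rfl | hq'
  · rw [Function.update_self]
    exact Nat.lt_succ_of_le (hβ ▸ (hT.1.mapsTo hp').2)
  · rw [Function.update_of_ne (ne_of_mem_of_not_mem hq' hb)]
    exact hlt hp' hq'

lemma IsSYCT.of_update (hcd : cd α = insert b (cd β)) (hb : b ∉ cd β) (hβ : β.sum = n)
    (hα : α.sum = n + 1) (hTb : T b = 0) (h : IsSYCT α (Function.update T b (n + 1))) :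
    IsSYCT β T := by
  obtain ⟨hSF, hrow, hcol, htriple⟩ := h
  have hSF' := (isStandardFilling_update_iff hcd hb hβ hα hTb).mp hSF
  have hsub : ∀ {q}, q ∈ cd β → q ∈ cd α := fun hq => hcd ▸ Finset.mem_insert_of_mem hq
  have heq : ∀ {q}, q ∈ cd β → Function.update T b (n + 1) q = T q := fun hq =>
    Function.update_of_ne (ne_of_mem_of_not_mem hq hb) _ _
  refine ⟨hSF', fun i j h1 h2 => ?_, fun j h1 h2 => ?_, fun k i j hij h1 h2 hle => ?_⟩
  · simpa only [heq h1, heq h2] using hrow i j (hsub h1) (hsub h2)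
  · simpa only [heq h1, heq h2] using hcol j (hsub h1) (hsub h2)
  · obtain ⟨h3, h4⟩ := htriple k i j hij (hsub h1) (hsub h2) (by rwa [heq h1, heq h2])
    rw [heq h2] at h4
    have h3' : (k + 1, j) ∈ cd β := by
      refine (Finset.mem_insert.mp (hcd ▸ h3)).resolve_left fun h => ?_
      rw [h, Function.update_self] at h4
      exact absurd (hβ ▸ (hSF'.1.mapsTo h2).2) (by omega)
    exact ⟨h3', by rwa [heq h3'] at h4⟩

lemma IsSYCT.update (h : IsAddableBox β α b) (hβ : β.sum = n) (hα : α.sum = n + 1)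
    (hT : IsSYCT β T) : IsSYCT α (Function.update T b (n + 1)) := by
  obtain ⟨hSF, hrow, hcol, htriple⟩ := hT
  have hTb : T b = 0 := hSF.2 b h.notMem
  have hlt := @update_lt_update _ _ T b n h.cd_eq h.notMem hSF hβ
  have heq : ∀ {q}, q ∈ cd β → Function.update T b (n + 1) q = T q := fun hq =>
    Function.update_of_ne (ne_of_mem_of_not_mem hq h.notMem) _ _
  refine ⟨(isStandardFilling_update_iff h.cd_eq h.notMem hβ hα hTb).mpr hSF,
    fun i j h1 h2 => hlt h1 h2 ?_ (hrow i j), fun j h1 h2 => hlt h1 h2 ?_ (hcol j),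
    fun k i j hij h1 h2 hle => ?_⟩
  · rintro rfl; exact h.right_notMem h2
  · rintro rfl; exact h.above_notMem rfl h2
  rcases Finset.mem_insert.mp (h.cd_eq ▸ h1) with rfl | h1'
  · exact absurd hle (not_le.mpr (hlt h2 h1 (by simp) fun _ hq => absurd hq h.notMem))
  rcases Finset.mem_insert.mp (h.cd_eq ▸ h2) with rfl | h2'
  · have hj : (k + 1, j) ∈ cd α := h.above_mem j hij h1
    exact ⟨hj, hlt hj h2 (by simp [hij.ne']) fun _ hq => absurd hq h.notMem⟩
  · obtain ⟨h3, h4⟩ := htriple k i j hij h1' h2' (by rwa [heq h1', heq h2'] at hle)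
    exact ⟨h.cd_eq ▸ Finset.mem_insert_of_mem h3, by rwa [heq h3, heq h2']⟩

lemma IsSYT.of_update (hcd : cd α = insert b (cd β)) (hb : b ∉ cd β) (hβ : β.sum = n)
    (hα : α.sum = n + 1) (hTb : T b = 0) (h : IsSYT α (Function.update T b (n + 1))) :
    IsSYT β T := by
  obtain ⟨hSF, hrow, hcol⟩ := h
  have hsub : ∀ {q}, q ∈ cd β → q ∈ cd α := fun hq => hcd ▸ Finset.mem_insert_of_mem hq
  have heq : ∀ {q}, q ∈ cd β → Function.update T b (n + 1) q = T q := fun hq =>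
    Function.update_of_ne (ne_of_mem_of_not_mem hq hb) _ _
  refine ⟨(isStandardFilling_update_iff hcd hb hβ hα hTb).mp hSF, fun i j h1 h2 => ?_,
    fun i j h1 h2 => ?_⟩
  · simpa only [heq h1, heq h2] using hrow i j (hsub h1) (hsub h2)
  · simpa only [heq h1, heq h2] using hcol i j (hsub h1) (hsub h2)

lemma IsSYT.update (h : IsAddableCorner β α b) (hβ : β.sum = n) (hα : α.sum = n + 1)
    (hT : IsSYT β T) : IsSYT α (Function.update T b (n + 1)) := by
  obtain ⟨hSF, hrow, hcol⟩ := hT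
  have hlt := @update_lt_update _ _ T b n h.cd_eq h.notMem hSF hβ
  refine ⟨(isStandardFilling_update_iff h.cd_eq h.notMem hβ hα (hSF.2 b h.notMem)).mpr hSF,
    fun i j h1 h2 => hlt h1 h2 ?_ (hrow i j), fun i j h1 h2 => hlt h1 h2 ?_ (hcol i j)⟩
  · rintro rfl; exact h.right_notMem h2
  · rintro rfl; exact h.above_notMem h2

end Orders

section ColumnSorting

lemma sort_insert_of_forall_lt {s : Finset ℕ} {a : ℕ} (h : ∀ x ∈ s, x < a) :
    (insert a s).sort (· ≤ ·) = s.sort (· ≤ ·) ++ [a] := by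
  have hnodup : (s.sort (· ≤ ·) ++ [a]).Nodup := by
    simpa [List.nodup_append, Finset.sort_nodup] using fun x hx => (h x hx).ne
  have hperm : ((insert a s).sort (· ≤ ·)).Perm (s.sort (· ≤ ·) ++ [a]) :=
    (List.perm_ext_iff_of_nodup (Finset.sort_nodup _ _) hnodup).mpr fun x => by
      simp [or_comm]
  refine hperm.eq_of_pairwise' (Finset.pairwise_sort _ _) ?_
  simpa [List.pairwise_append, Finset.pairwise_sort] using fun x hx => (h x hx).le

lemma colSortTo_update {L L' A A' : List ℕ} {T : ℕ × ℕ → ℕ} {b : ℕ × ℕ} {N : ℕ}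
    (hL' : L'.Pairwise (· ≥ ·)) (hperm : A'.Perm L') (hA : cd A = insert b (cd A'))
    (hb : b ∉ cd A') (hL : cd L = insert (b.1, colLength L' b.1 + 1) (cd L'))
    (hT : ∀ p ∈ cd A', T p < N) (hinj : Set.InjOn T (cd A')) :
    colSortTo L A (Function.update T b N) =
      Function.update (colSortTo L' A' T) (b.1, colLength L' b.1 + 1) N := by
  have hb1 : 1 ≤ b.1 := (mem_cd.mp (hA ▸ Finset.mem_insert_self b _)).1
  have hcol : ∀ i, ((cd A).filter (·.1 = i)).image (Function.update T b N) =
      if b.1 = i then insert N (((cd A').filter (·.1 = i)).image T)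
      else ((cd A').filter (·.1 = i)).image T := by
    intro i
    have heq : Set.EqOn (Function.update T b N) T ((cd A').filter (·.1 = i) : Finset _) :=
      fun q hq => Function.update_of_ne (ne_of_mem_of_not_mem (Finset.mem_filter.mp hq).1 hb) _ _
    rw [hA, Finset.filter_insert]
    split_ifs
    · rw [Finset.image_insert, Function.update_self, Finset.image_congr heq]
    · exact Finset.image_congr heq
  have hsort : (insert N (((cd A').filter (·.1 = b.1)).image T)).sort (· ≤ ·) =
      (((cd A').filter (·.1 = b.1)).image T).sort (· ≤ ·) ++ [N] :=
    sort_insert_of_forall_lt fun x hx => by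
      obtain ⟨q, hq, rfl⟩ := Finset.mem_image.mp hx
      exact hT q (Finset.mem_filter.mp hq).1
  have hlen : ((((cd A').filter (·.1 = b.1)).image T).sort (· ≤ ·)).length =
      colLength L' b.1 := by
    rw [Finset.length_sort, Finset.card_image_of_injOn
      (hinj.mono (Finset.coe_subset.mpr (Finset.filter_subset _ _))),
      card_filter_fst_cd hb1, colLength_eq_of_perm hperm]
  funext ⟨x, y⟩
  by_cases hp : (x, y) = (b.1, colLength L' b.1 + 1)
  · obtain ⟨rfl, rfl⟩ := Prod.mk.inj hp
    simp only [colSortTo, hL, Finset.mem_insert_self, if_true, Function.update_self, hcol,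
      hsort, Nat.add_sub_cancel]
    rw [List.getD_append_right _ _ _ _ hlen.le, hlen, Nat.sub_self, List.getD_cons_zero]
  rw [Function.update_of_ne hp]
  simp only [colSortTo, hL, Finset.mem_insert, hp, false_or]
  split_ifs with hmem
  · rw [hcol]
    split_ifs with hx
    · subst hx
      obtain ⟨-, hy, hyc⟩ := (mem_cd_iff_le_colLength hL').mp hmem
      rw [hsort, List.getD_append _ _ _ _ (by rw [hlen]; omega)]
    · rfl
  · rfl

end ColumnSorting
section Empty

lemma isStandardFilling_nil {T : ℕ × ℕ → ℕ} : IsStandardFilling [] T ↔ T = 0 := by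
  simp [IsStandardFilling, funext_iff]

lemma SPYTset_nil : SPYTset [] = {0} := by
  ext T
  simp only [SPYTset, IsSYT, RowsIncrease, ColsIncrease, PeakCond, isStandardFilling_nil,
    Set.mem_ofPred_eq, Set.mem_singleton_iff, cd_nil, List.sum_nil]
  simp only [Finset.notMem_empty, false_implies, implies_true, and_true, and_iff_left_iff_imp]
  intro _ k hk hk0
  omega

lemma SPYCTset_nil : SPYCTset [] = {0} := by
  ext T
  simp only [SPYCTset, IsSPYCT, IsSYCT, RowsIncrease, FirstColIncreases, YoungTriple, PeakCond,
    isStandardFilling_nil, Set.mem_ofPred_eq, Set.mem_singleton_iff, cd_nil, List.sum_nil]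
  simp only [Finset.notMem_empty, false_implies, implies_true, and_true, and_iff_left_iff_imp]
  intro _ k hk hk0
  omega

lemma colSortTo_nil (α : List ℕ) (T : ℕ × ℕ → ℕ) : colSortTo [] α T = 0 :=
  funext fun _ => if_neg (by simp)

end Empty

theorem colSortTo_mem_SPYTset {n : ℕ} {l α : List ℕ} {T : ℕ × ℕ → ℕ}
    (hl : l.Pairwise (· ≥ ·)) (hα : IsPeakComposition n α) (hperm : α.Perm l)
    (hT : T ∈ SPYCTset α) : colSortTo l α T ∈ SPYTset l := by
  induction n generalizing l α T with
  | zero =>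
    obtain rfl := (hα.1.of_perm hperm).eq_nil
    rw [colSortTo_nil, SPYTset_nil]
    rfl
  | succ n ih =>
    obtain ⟨⟨hSF, hSYCT⟩, hPC⟩ := hT
    have hαsum := hα.1.2
    obtain ⟨b, β, T, hβ, hcd, hbβ, hT0, rfl⟩ := hPC.exists_eq_update hSF hαsum
    have hSYCT' := IsSYCT.of_update hcd hbβ hβ.1.2 hαsum hT0 ⟨hSF, hSYCT⟩
    have hPC' := (peakCond_update_iff hcd hbβ hβ.1.2 hα hSYCT'.1).mp hPC
    set l' := (β : Multiset ℕ).sort (· ≥ ·)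
    have hl'β : l'.Perm β := Multiset.coe_eq_coe.mp (Multiset.sort_eq _ _)
    have hl' : l'.Pairwise (· ≥ ·) := Multiset.pairwise_sort _ _
    have hcorner := isAddableCorner_of_colLength hl hl'
      (mem_cd.mp (hcd ▸ Finset.mem_insert_self b _)).1 fun i hi => by
      rw [← colLength_eq_of_perm hperm, colLength_of_cd_eq_insert hcd hbβ hi,
        colLength_eq_of_perm hl'β]
    obtain ⟨hU, hPCU⟩ := ih hl' hβ hl'β.symm ⟨hSYCT', hPC'⟩
    have hl'sum : l'.sum = n := hl'β.sum_eq.trans hβ.1.2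
    rw [colSortTo_update hl' hl'β.symm hcd hbβ hcorner.cd_eq
      (fun p hp => Nat.lt_succ_of_le (hβ.1.2 ▸ (hSYCT'.1.1.mapsTo hp).2)) hSYCT'.1.1.injOn]
    exact ⟨hU.update hcorner hl'sum (hperm.sum_eq ▸ hαsum),
      (peakCond_update_iff hcorner.cd_eq hcorner.notMem hl'sum (hα.of_perm hl hperm) hU.1).mpr
        hPCU⟩

lemma exists_isAddableBox_of_colLength {n i : ℕ} {α' l : List ℕ}
    (hα' : IsPeakComposition n α') (hl : IsPeakComposition (n + 1) l) (hi : 1 ≤ i)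
    (h : ∀ x, 1 ≤ x → colLength l x = colLength α' x + if i = x then 1 else 0) :
    ∃ α j, IsAddableBox α' α (i, j) ∧ IsPeakComposition (n + 1) α ∧ α.Perm l := by
  have hone : i = 1 → ∀ a ∈ α', 1 < a := by
    rintro rfl a ha
    have c1 : α'.count 1 + colLength α' 2 = colLength α' 1 := count_add_colLength_succ α' 1
    have c2 : l.count 1 + colLength l 2 = colLength l 1 := count_add_colLength_succ l 1
    have h1 := h 1 le_rfl
    have h2 := h 2 (by omega)
    rw [if_pos rfl] at h1
    rw [if_neg (by omega)] at h2
    have := count_one_le_of_one_lt_getD hl.2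
    have hcount : α'.count 1 = 0 := by omega
    have := hα'.1.1 a ha
    have : a ≠ 1 := by rintro rfl; exact List.count_eq_zero.mp hcount ha
    omega
  have hmem : 2 ≤ i → i - 1 ∈ α' := by
    intro hi2
    have c1 := count_add_colLength_succ α' (i - 1)
    have h1 := h (i - 1) (by omega)
    have h2 := h i hi
    have := colLength_anti l (Nat.sub_le i 1)
    rw [Nat.sub_add_cancel hi] at c1
    rw [if_neg (by omega)] at h1
    rw [if_pos rfl] at h2
    exact List.count_pos_iff.mp (by omega)
  obtain ⟨α, j, hbox, hpos, hpeak⟩ := exists_isAddableBox hα' hi hone hmem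
  have hperm : α.Perm l := perm_of_colLength_eq hpos hl.1.1 fun x hx => by
    rw [colLength_of_cd_eq_insert hbox.cd_eq hbox.notMem hx, h x hx]
  exact ⟨α, j, hbox, ⟨⟨hpos, hperm.sum_eq.trans hl.1.2⟩, hpeak⟩, hperm⟩

lemma pairwise_ge_of_cd_eq_insert {l β : List ℕ} {b : ℕ × ℕ} (hl : l.Pairwise (· ≥ ·))
    (hβ : ∀ a ∈ β, 0 < a) (hcd : cd l = insert b (cd β)) (hup : (b.1, b.2 + 1) ∉ cd l) :
    β.Pairwise (· ≥ ·) := by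
  refine (pairwise_ge_iff_mem_cd hβ).mpr fun i j h => ?_
  have h2 : (i, j + 2) ∈ cd l := hcd ▸ Finset.mem_insert_of_mem h
  have h1 : (i, j + 1) ∈ cd l := by
    rw [mem_cd_iff_le_colLength hl] at h2 ⊢
    omega
  rcases Finset.mem_insert.mp (hcd ▸ h1) with rfl | h1
  · exact absurd h2 hup
  · exact h1

theorem exists_SPYCT_colSortTo_eq {n : ℕ} {l : List ℕ} {U : ℕ × ℕ → ℕ}
    (hl : l.Pairwise (· ≥ ·)) (hpeak : IsPeakComposition n l) (hU : U ∈ SPYTset l) :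
    ∃ α, IsPeakComposition n α ∧ α.Perm l ∧ ∃ T ∈ SPYCTset α, U = colSortTo l α T := by
  induction n generalizing l U with
  | zero =>
    obtain rfl := hpeak.1.eq_nil
    rw [SPYTset_nil, Set.mem_singleton_iff] at hU
    exact ⟨[], hpeak, .refl _, 0, by rw [SPYCTset_nil]; rfl, by rw [hU, colSortTo_nil]⟩
  | succ n ih =>
    obtain ⟨hSYT, hPC⟩ := hU
    have hlsum := hpeak.1.2
    obtain ⟨b, β, U, hβ, hcd, hbβ, hU0, rfl⟩ := hPC.exists_eq_update hSYT.1 hlsum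
    have hb : b ∈ cd l := hcd ▸ Finset.mem_insert_self b _
    have hup : (b.1, b.2 + 1) ∉ cd l := fun h => by
      have hlt : Function.update U b (n + 1) b < _ := hSYT.2.2 b.1 b.2 hb h
      have := (hSYT.1.1.mapsTo h).2
      rw [Function.update_self] at hlt
      omega
    have hb2 : b = (b.1, colLength β b.1 + 1) := by
      have := (mem_cd_iff_le_colLength hl).mp hb
      rw [mem_cd_iff_le_colLength hl] at hup
      rw [colLength_of_cd_eq_insert hcd hbβ this.1, if_pos rfl] at this hup
      exact Prod.ext rfl (show b.2 = colLength β b.1 + 1 by omega)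
    have hβl := pairwise_ge_of_cd_eq_insert hl hβ.1.1 hcd hup
    have hSYT' := IsSYT.of_update hcd hbβ hβ.1.2 hlsum hU0 hSYT
    obtain ⟨α', hα', hα'β, T, ⟨hSYCT, hPCT⟩, rfl⟩ :=
      ih hβl hβ ⟨hSYT', (peakCond_update_iff hcd hbβ hβ.1.2 hpeak hSYT'.1).mp hPC⟩
    obtain ⟨α, j, hbox, hα, hperm⟩ := exists_isAddableBox_of_colLength hα' hpeak
      (mem_cd.mp hb).1 fun x hx => by
        rw [colLength_of_cd_eq_insert hcd hbβ hx, colLength_eq_of_perm hα'β]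
    refine ⟨α, hα, hperm, Function.update T (b.1, j) (n + 1),
      ⟨hSYCT.update hbox hα'.1.2 hα.1.2,
        (peakCond_update_iff hbox.cd_eq hbox.notMem hα'.1.2 hα hSYCT.1).mpr hPCT⟩, ?_⟩
    rw [colSortTo_update hβl hα'β hbox.cd_eq hbox.notMem (hb2 ▸ hcd)
      (fun p hp => Nat.lt_succ_of_le (hα'.1.2 ▸ (hSYCT.1.1.mapsTo hp).2)) hSYCT.1.1.injOn]
    exact congrArg (Function.update _ · _) hb2

theorem sort_image_eq_SPYT_general (n : ℕ) (l : List ℕ)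
    (hsorted : l.Pairwise (· ≥ ·)) (hpeak : IsPeakComposition n l) :
    {U : ℕ × ℕ → ℕ | ∃ α : List ℕ, IsPeakComposition n α ∧ α.Perm l ∧
        ∃ T ∈ SPYCTset α, U = colSortTo l α T} =
      SPYTset l := by
  ext U
  constructor
  · rintro ⟨α, hα, hperm, T, hT, rfl⟩
    exact colSortTo_mem_SPYTset hsorted hα hperm hT
  · exact exists_SPYCT_colSortTo_eq hsorted hpeak

/-- For a peak partition `l`, the image under the column-sorting map of
the union of the sets `SPYCT(α)`, over all peak compositions `α` whose decreasing
rearrangement is `l`, equals `SPYT(l)`. -/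
theorem sort_image_eq_SPYT (n : ℕ) (l : List ℕ) (hcomp : IsComposition n l)
    (hsorted : l.Pairwise (· ≥ ·)) (hpeak : IsPeakComposition n l) :
    {U : ℕ × ℕ → ℕ | ∃ α : List ℕ, IsPeakComposition n α ∧ α.Perm l ∧
        ∃ T ∈ SPYCTset α, U = colSortTo l α T} =
      SPYTset l :=
  sort_image_eq_SPYT_general n l hsorted hpeak

end PaperSPIT
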